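/- On the set of 2×2 complex matrices Z with N(Z) = det Z ≠ 0, the following identity of 4×4 matrices of functions holds: (∂⊗∂)(1/N(Z)) = (2/N(Z))·(Z⁻¹ ⊗ Z⁻¹) − (1/(2N(Z)²))·(e₀⊗e₀ + e₁⊗e₁ + e₂⊗e₂ + e₃⊗e₃), where ∂⊗∂ is the Kronecker product of the operator matrix ∂ = [[∂₁₁,∂₂₁],[∂₁₂,∂₂₂]] with itself (a 4×4 matrix of second-order operators applied to the scalar function 1/N), Z⁻¹⊗Z⁻¹ is the Kronecker product of matrix inverses, and e₀,e₁,e₂,e₃ are the quaternion units realized as [[1,0],[0,1]], [[0,−i],[−i,0]], [[0,−1],[1,0]], [[−i,0],[0,i]]. -/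

import Mathlib

/-!
`N` is quadratic with `∂ₖᵢ N = (adj Z)ᵢₖ`, and for 2×2 matrices `adj Z` is linear in `Z` with
`∂ₖᵢ (adj Z)ⱼₗ = εᵢⱼ εₖₗ`, where `ε` is the Levi-Civita symbol. Hence `∂ₗⱼ (1/N) = -(adj Z)ⱼₗ / N²`
near any `Z` with `N(Z) ≠ 0`, and differentiating once more gives
`-εᵢⱼ εₖₗ / N² + 2 (adj Z)ᵢₖ (adj Z)ⱼₗ / N³`. Since `Z⁻¹ = adj Z / N`, the second term is
`(2/N) (Z⁻¹ ⊗ Z⁻¹)`, and the first is the quaternion term because `∑ₐ eₐ ⊗ eₐ = 2 ε ⊗ ε`.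
-/

noncomputable section

/-- The space of 2×2 complex matrices, as functions of indices. -/
abbrev M2 : Type := Fin 2 → Fin 2 → ℂ

/-- The elementary matrix with a 1 in position (i,j). -/
def eM (i j : Fin 2) : M2 := fun a b => if a = i ∧ b = j then (1 : ℂ) else 0

/-- The partial derivative ∂/∂z_{ij}. -/
noncomputable def pd (i j : Fin 2) (f : M2 → ℂ) : M2 → ℂ :=
  fun Z => fderiv ℂ f Z (eM i j)

/-- The determinant N(Z) = z₁₁z₂₂ − z₁₂z₂₁. -/
def detM (Z : M2) : ℂ := Z 0 0 * Z 1 1 - Z 0 1 * Z 1 0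

open scoped Kronecker

/-- The quaternion units realized as 2×2 complex matrices. -/
def e0 : Matrix (Fin 2) (Fin 2) ℂ := !![1, 0; 0, 1]
def e1 : Matrix (Fin 2) (Fin 2) ℂ := !![0, -Complex.I; -Complex.I, 0]
def e2 : Matrix (Fin 2) (Fin 2) ℂ := !![0, -1; 1, 0]
def e3 : Matrix (Fin 2) (Fin 2) ℂ := !![-Complex.I, 0; 0, Complex.I]

open Topology

section PartialDerivatives

variable {f g : M2 → ℂ} {Z : M2} {i j : Fin 2}

lemma pd_congr_of_eventuallyEq (h : f =ᶠ[𝓝 Z] g) : pd i j f Z = pd i j g Z := by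
  simp only [pd, h.fderiv_eq]

lemma pd_apply_apply (a b : Fin 2) : pd i j (fun Y => Y a b) Z = eM i j a b := by
  rw [pd, fderiv_apply (by fun_prop), fderiv_apply differentiableAt_id]
  simp

lemma pd_neg : pd i j (fun Y => -f Y) Z = -pd i j f Z := by
  simp [pd, fderiv_fun_neg]

lemma pd_sub (hf : DifferentiableAt ℂ f Z) (hg : DifferentiableAt ℂ g Z) :
    pd i j (fun Y => f Y - g Y) Z = pd i j f Z - pd i j g Z := by
  simp [pd, fderiv_fun_sub hf hg]

lemma pd_mul (hf : DifferentiableAt ℂ f Z) (hg : DifferentiableAt ℂ g Z) :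
    pd i j (fun Y => f Y * g Y) Z = pd i j f Z * g Z + f Z * pd i j g Z := by
  simp only [pd, fderiv_fun_mul hf hg, add_apply,
    smul_apply, smul_eq_mul]
  ring

lemma pd_inv (hf : DifferentiableAt ℂ f Z) (hZ : f Z ≠ 0) :
    pd i j (fun Y => (f Y)⁻¹) Z = -pd i j f Z / f Z ^ 2 := by
  have hcomp : (fun Y => (f Y)⁻¹) = (fun x : ℂ => x⁻¹) ∘ f := rfl
  simp only [pd, hcomp, fderiv_comp Z (differentiableAt_inv hZ) hf, fderiv_inv,
    ContinuousLinearMap.comp_apply, ContinuousLinearMap.toSpanSingleton_apply, smul_eq_mul]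
  ring

end PartialDerivatives

def leviCivita : Matrix (Fin 2) (Fin 2) ℂ := !![0, 1; -1, 0]

lemma differentiable_detM : Differentiable ℂ detM := by
  unfold detM
  fun_prop

lemma differentiable_adjugate_apply (j l : Fin 2) :
    Differentiable ℂ (fun Y : M2 => (Matrix.of Y).adjugate j l) := by
  fin_cases j <;> fin_cases l <;> simp [Matrix.adjugate_fin_two] <;> fun_prop

lemma pd_detM (k i : Fin 2) (Y : M2) : pd k i detM Y = (Matrix.of Y).adjugate i k := by
  unfold detM
  rw [pd_sub (by fun_prop) (by fun_prop), pd_mul (by fun_prop) (by fun_prop),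
    pd_mul (by fun_prop) (by fun_prop)]
  fin_cases k <;> fin_cases i <;> simp [pd_apply_apply, eM, Matrix.adjugate_fin_two]

lemma pd_adjugate_apply (k i j l : Fin 2) (Y : M2) :
    pd k i (fun Y : M2 => (Matrix.of Y).adjugate j l) Y = leviCivita i j * leviCivita k l := by
  fin_cases j <;> fin_cases l <;> simp [Matrix.adjugate_fin_two, pd_neg, pd_apply_apply] <;>
    fin_cases k <;> fin_cases i <;> simp [eM, leviCivita]

lemma isOpen_detM_ne_zero : IsOpen {Y : M2 | detM Y ≠ 0} :=
  isOpen_ne.preimage differentiable_detM.continuous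

lemma pd_inv_detM (l j : Fin 2) {Y : M2} (hY : detM Y ≠ 0) :
    pd l j (fun Y => (detM Y)⁻¹) Y = -(Matrix.of Y).adjugate j l / detM Y ^ 2 := by
  rw [pd_inv (differentiable_detM Y) hY, pd_detM]

lemma pd_pd_inv_detM (i j k l : Fin 2) {Z : M2} (hZ : detM Z ≠ 0) :
    pd k i (pd l j (fun Y => (detM Y)⁻¹)) Z =
      -(leviCivita i j * leviCivita k l) / detM Z ^ 2 +
        2 * (Matrix.of Z).adjugate i k * (Matrix.of Z).adjugate j l / detM Z ^ 3 := by
  have hlocal : pd l j (fun Y => (detM Y)⁻¹) =ᶠ[𝓝 Z]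
      fun Y => -((Matrix.of Y).adjugate j l * ((detM Y)⁻¹ * (detM Y)⁻¹)) := by
    filter_upwards [isOpen_detM_ne_zero.mem_nhds hZ] with Y hY
    rw [pd_inv_detM l j hY]
    ring
  have hN := differentiable_detM Z
  have hNinv : DifferentiableAt ℂ (fun Y => (detM Y)⁻¹) Z := hN.inv hZ
  rw [pd_congr_of_eventuallyEq hlocal, pd_neg,
    pd_mul (differentiable_adjugate_apply j l Z) (hNinv.fun_mul hNinv), pd_mul hNinv hNinv,
    pd_inv hN hZ, pd_adjugate_apply, pd_detM]
  field_simp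
  ring

lemma inv_of_apply (Z : M2) (i k : Fin 2) :
    (Matrix.of Z)⁻¹ i k = (detM Z)⁻¹ * (Matrix.of Z).adjugate i k := by
  simp [Matrix.inv_def, Matrix.det_fin_two, detM]

/-- A Fierz identity: `e₁, e₂, e₃` are `-i` times the Pauli matrices. -/
lemma kronecker_sum_quaternion_units_apply (i j k l : Fin 2) :
    (e0 ⊗ₖ e0 + e1 ⊗ₖ e1 + e2 ⊗ₖ e2 + e3 ⊗ₖ e3) (i, j) (k, l) =
      2 * leviCivita i j * leviCivita k l := by
  fin_cases i <;> fin_cases j <;> fin_cases k <;> fin_cases l <;>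
    simp [e0, e1, e2, e3, leviCivita] <;> norm_num

/-- The `((i,j),(k,l))` entry of `∂⊗∂` composes the `(i,k)` entry of `∂`, namely
`∂_{k+1,i+1} = pd k i`, with its `(j,l)` entry `pd l j`. -/
theorem stmt10 (Z : M2) (h : detM Z ≠ 0) (i j k l : Fin 2) :
    pd k i (pd l j (fun Y => (detM Y)⁻¹)) Z =
      2 / detM Z * ((Matrix.of Z)⁻¹ i k * (Matrix.of Z)⁻¹ j l) -
        1 / (2 * detM Z ^ 2) *
          (e0 ⊗ₖ e0 + e1 ⊗ₖ e1 + e2 ⊗ₖ e2 + e3 ⊗ₖ e3) (i, j) (k, l) := by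
  rw [pd_pd_inv_detM i j k l h, inv_of_apply, inv_of_apply,
    kronecker_sum_quaternion_units_apply]
  field_simp
  ring
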